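/- For all e₀,e₁,…,e₆ ∈ ℂ, set y₁ = −3e₀−2e₁+4e₂+2e₃+2e₄, y₂ = −3e₀−2e₂+4e₁+2e₃+2e₄, y₃ = 3e₀+2e₄−4e₃−2e₁−2e₂, y₄ = 3e₀+2e₃−4e₄−2e₁−2e₂, y₅ = −9e₀+4e₁+4e₂+2e₃+2e₄+6e₅, y₆ = −9e₀+4e₁+4e₂+2e₃+2e₄+6e₆, y₇ = 9e₀−4e₃−4e₄−2e₁−2e₂−6e₅−6e₆, y₈ = 9e₀−4e₁−4e₂−2e₃−2e₄. Then y₁+⋯+y₈ = 0 and y₁³+y₂³+⋯+y₈³ = −2⁴·3⁴·hA₀₀(e₀,e₁,…,e₆) = −1296·hA₀₀(e₀,e₁,…,e₆). -/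

import Mathlib

/-!
STATEMENT 10: Under the substitution ytoe, one has y₁+⋯+y₈ = 0 and
F₈ = y₁³+⋯+y₈³ = −2⁴·3⁴·hA₀₀ = −1296·hA₀₀.
-/

/-- The homogenized accessory-parameter polynomial hA₀₀(e₀,e₁,…,e₆),
with e₇ := 3e₀ − (e₁+⋯+e₆). -/
noncomputable def hA00 (e0 e1 e2 e3 e4 e5 e6 : ℂ) : ℂ :=
  let e7 := 3*e0 - (e1 + e2 + e3 + e4 + e5 + e6)
  (-4*(e1 + e2 - e3 - e4)^3 - 27*e5*e6*e7
    + 9*(e1 + e2 - e3 - e4)*(e5*e6 + e5*e7 + e6*e7 - 2*e0^2)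
    + 9*e1*e2*(e1 + e2 - e0) + 18*(e1 + e2 - e0)*(e3^2 + e3*e4 + e4^2)
    - 9*e3*e4*(e3 + e4 - e0) - 18*(e3 + e4 - e0)*(e1^2 + e1*e2 + e2^2)) / 54

theorem F8_eq_neg_1296_hA00 (e0 e1 e2 e3 e4 e5 e6 : ℂ)
    (y1 y2 y3 y4 y5 y6 y7 y8 : ℂ)
    (hy1 : y1 = -3*e0 - 2*e1 + 4*e2 + 2*e3 + 2*e4)
    (hy2 : y2 = -3*e0 - 2*e2 + 4*e1 + 2*e3 + 2*e4)
    (hy3 : y3 = 3*e0 + 2*e4 - 4*e3 - 2*e1 - 2*e2)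
    (hy4 : y4 = 3*e0 + 2*e3 - 4*e4 - 2*e1 - 2*e2)
    (hy5 : y5 = -9*e0 + 4*e1 + 4*e2 + 2*e3 + 2*e4 + 6*e5)
    (hy6 : y6 = -9*e0 + 4*e1 + 4*e2 + 2*e3 + 2*e4 + 6*e6)
    (hy7 : y7 = 9*e0 - 4*e3 - 4*e4 - 2*e1 - 2*e2 - 6*e5 - 6*e6)
    (hy8 : y8 = 9*e0 - 4*e1 - 4*e2 - 2*e3 - 2*e4) :
    y1 + y2 + y3 + y4 + y5 + y6 + y7 + y8 = 0 ∧
    y1^3 + y2^3 + y3^3 + y4^3 + y5^3 + y6^3 + y7^3 + y8^3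
      = -1296 * hA00 e0 e1 e2 e3 e4 e5 e6 := by
  subst hy1 hy2 hy3 hy4 hy5 hy6 hy7 hy8
  refine ⟨by ring, ?_⟩
  unfold hA00
  ring
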